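/- arXiv:math/0511350 — 6 statements merged into one kernel-verified Lean document; each statement's English description precedes it below -/
import Mathlib

section
/- For every U ∈ SL(2,ℂ) the matrix φ(U) is Lorentzian: φ(U)ᵀ · η · φ(U) = η. Equivalently, the linear transformation (5.17) induced by conjugation by U preserves the Minkowski quadratic form. -/
open Matrix Complex

/-- The Minkowski metric matrix `diag(1, -1, -1, -1)`. -/
noncomputable def minkEta : Matrix (Fin 4) (Fin 4) ℝ := Matrix.diagonal ![1, -1, -1, -1]

/-- The map `h : ℝ⁴ → (2×2 complex matrices)`,
`h(w) = [[w⁰+w³, w¹−i·w²],[w¹+i·w², w⁰−w³]]`. -/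
noncomputable def hMat (v : Fin 4 → ℝ) : Matrix (Fin 2) (Fin 2) ℂ :=
  !![(v 0 : ℂ) + (v 3 : ℂ), (v 1 : ℂ) - Complex.I * (v 2 : ℂ);
     (v 1 : ℂ) + Complex.I * (v 2 : ℂ), (v 0 : ℂ) - (v 3 : ℂ)]

/-- The map `w` taking a 2×2 complex matrix `A` to the 4-tuple
`((A₁₁+A₂₂)/2, (A₁₂+A₂₁)/2, (i·A₁₂ − i·A₂₁)/2, (A₁₁−A₂₂)/2)`. -/
noncomputable def wComp (A : Matrix (Fin 2) (Fin 2) ℂ) : Fin 4 → ℂ :=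
  ![(A 0 0 + A 1 1) / 2, (A 0 1 + A 1 0) / 2,
    (Complex.I * A 0 1 - Complex.I * A 1 0) / 2, (A 0 0 - A 1 1) / 2]

lemma det_hMat (v : Fin 4 → ℝ) :
    (hMat v).det = ((v 0 : ℂ)^2 - (v 1)^2 - (v 2)^2 - (v 3)^2) := by
  simp only [hMat, Matrix.det_fin_two_of, Complex.I_sq]
  ring_nf
  rw [Complex.I_sq]
  ring

lemma quad_eq (v : Fin 4 → ℝ) :
    v ⬝ᵥ minkEta.mulVec v = (v 0)^2 - (v 1)^2 - (v 2)^2 - (v 3)^2 := by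
  simp [minkEta, Matrix.mulVec_diagonal, dotProduct, Fin.sum_univ_four]
  ring

/-- For every `U ∈ SL(2,ℂ)`, the matrix `φ(U)` (the unique real 4×4 matrix `S` with
`h(S·w) = U ⬝ h(w) ⬝ Uᴴ` for all `w`) is Lorentzian: `Sᵀ ⬝ η ⬝ S = η`. -/
theorem phi_isLorentz
    (U : Matrix (Fin 2) (Fin 2) ℂ) (hU : U.det = 1)
    (S : Matrix (Fin 4) (Fin 4) ℝ)
    (hS : ∀ v : Fin 4 → ℝ, hMat (S.mulVec v) = U * hMat v * Uᴴ) :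
    Sᵀ * minkEta * S = minkEta := by
  set M : Matrix (Fin 4) (Fin 4) ℝ := Sᵀ * minkEta * S with hM
  -- quadratic form preserved
  have hQ : ∀ v : Fin 4 → ℝ, v ⬝ᵥ M.mulVec v = v ⬝ᵥ minkEta.mulVec v := by
    intro v
    have hdet : (hMat (S.mulVec v)).det = (hMat v).det := by
      rw [hS v, Matrix.det_mul, Matrix.det_mul, hU, Matrix.det_conjTranspose, hU]
      simp
    rw [det_hMat, det_hMat] at hdet
    have hreal : (S.mulVec v) ⬝ᵥ minkEta.mulVec (S.mulVec v) = v ⬝ᵥ minkEta.mulVec v := by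
      rw [quad_eq, quad_eq]
      exact_mod_cast hdet
    calc v ⬝ᵥ M.mulVec v = (S.mulVec v) ⬝ᵥ minkEta.mulVec (S.mulVec v) := by
          rw [hM, Matrix.mul_assoc, ← Matrix.mulVec_mulVec, ← Matrix.mulVec_mulVec,
            Matrix.dotProduct_mulVec, Matrix.vecMul_transpose]
      _ = v ⬝ᵥ minkEta.mulVec v := hreal
  -- M is symmetric
  have hMsymm : Mᵀ = M := by
    rw [hM, Matrix.transpose_mul, Matrix.transpose_mul, Matrix.transpose_transpose]
    have : minkEtaᵀ = minkEta := by simp [minkEta]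
    rw [this, Matrix.mul_assoc]
  have hEsymm : minkEtaᵀ = minkEta := by simp [minkEta]
  -- bilinear form preserved by polarization
  have hB : ∀ i j : Fin 4, M i j = minkEta i j := by
    intro i j
    have key := hQ (Pi.single i 1 + Pi.single j 1)
    have hi := hQ (Pi.single i 1)
    have hj := hQ (Pi.single j 1)
    have expand : ∀ (A : Matrix (Fin 4) (Fin 4) ℝ), Aᵀ = A →
        (Pi.single i 1 + Pi.single j 1 : Fin 4 → ℝ) ⬝ᵥ
          A.mulVec (Pi.single i 1 + Pi.single j 1) =
        (Pi.single i 1 : Fin 4 → ℝ) ⬝ᵥ A.mulVec (Pi.single i 1) +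
        (Pi.single j 1 : Fin 4 → ℝ) ⬝ᵥ A.mulVec (Pi.single j 1) + 2 * A i j := by
      intro A hA
      have hAij : A j i = A i j := congrFun (congrFun hA i) j
      simp [Matrix.mulVec_add, dotProduct_add, add_dotProduct,
        Matrix.mulVec_single, dotProduct_single, hAij]
      ring
    rw [expand M hMsymm, expand minkEta hEsymm, hi, hj] at key
    linarith
  ext i j
  exact hB i j
end

section
/- For every U ∈ SL(2,ℂ) the (0,0)-entry of φ(U) is given by φ(U)₀₀ = (|U₁₁|² + |U₁₂|² + |U₂₁|² + |U₂₂|²)/2, and in particular φ(U)₀₀ > 0 (the matrix φ(U) is orthochronous). (Formula (5.18).) -/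
open Matrix Complex

/-- The Minkowski metric matrix `diag(1, -1, -1, -1)`. -/
noncomputable def eta : Matrix (Fin 4) (Fin 4) ℝ := Matrix.diagonal ![1, -1, -1, -1]

/-!
Since `h(e₀) = 1`, the defining relation applied to `e₀` gives `h(φ(U) e₀) = U Uᴴ`. Taking traces,
with `tr h(w) = 2 w⁰`, yields `2 φ(U)₀₀ = tr (U Uᴴ) = ∑ |Uᵢⱼ|²`, which is positive because
`det U = 1` forces `U ≠ 0`.
-/

theorem Matrix.trace_mul_conjTranspose_self_eq_sum_norm_sq {m n 𝕜 : Type*}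
    [Fintype m] [Fintype n] [RCLike 𝕜] (A : Matrix m n 𝕜) :
    (A * Aᴴ).trace = ((∑ i, ∑ j, ‖A i j‖ ^ 2 : ℝ) : 𝕜) := by
  simp [trace, mul_apply, RCLike.mul_conj]

theorem Matrix.sum_sum_norm_sq_pos {m n E : Type*} [Fintype m] [Fintype n] [NormedAddCommGroup E]
    {A : Matrix m n E} (hA : A ≠ 0) : 0 < ∑ i, ∑ j, ‖A i j‖ ^ 2 := by
  obtain ⟨i, j, hij⟩ : ∃ i j, A i j ≠ 0 := by
    by_contra! h
    exact hA (Matrix.ext h)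
  exact Finset.sum_pos' (fun _ _ => by positivity)
    ⟨i, Finset.mem_univ _, Finset.sum_pos' (fun _ _ => by positivity)
      ⟨j, Finset.mem_univ _, by positivity⟩⟩

theorem hMat_single_zero_one : hMat (Pi.single 0 1) = 1 := by
  ext i j; fin_cases i <;> fin_cases j <;> simp [hMat]

theorem trace_hMat (v : Fin 4 → ℝ) : (hMat v).trace = 2 * v 0 := by
  simp [hMat, trace_fin_two]; ring

/-- **Formula (5.18)**: for `U ∈ SL(2,ℂ)` the `(0,0)`-entry of `φ(U)` equals
`(|U₁₁|² + |U₁₂|² + |U₂₁|² + |U₂₂|²)/2 > 0`, so `φ(U)` is orthochronous. -/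
theorem phi_entry_zero_zero
    (U : Matrix (Fin 2) (Fin 2) ℂ) (hU : U.det = 1)
    (S : Matrix (Fin 4) (Fin 4) ℝ)
    (hS : ∀ v : Fin 4 → ℝ, hMat (S.mulVec v) = U * hMat v * Uᴴ) :
    S 0 0 = (‖U 0 0‖ ^ 2 + ‖U 0 1‖ ^ 2
      + ‖U 1 0‖ ^ 2 + ‖U 1 1‖ ^ 2) / 2 ∧
    0 < S 0 0 := by
  have hcol : hMat (S.col 0) = U * Uᴴ := by
    simpa [mulVec_single_one, hMat_single_zero_one] using hS (Pi.single 0 1)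
  have htrace : 2 * S 0 0 = ∑ i, ∑ j, ‖U i j‖ ^ 2 := by
    have := congrArg trace hcol
    rw [trace_hMat, col_apply, trace_mul_conjTranspose_self_eq_sum_norm_sq] at this
    exact RCLike.ofReal_injective (K := ℂ) (by simpa using this)
  have hpos := sum_sum_norm_sq_pos (A := U) fun h => by simp [h] at hU
  simp only [Fin.sum_univ_two] at htrace hpos
  constructor <;> linarith
end

section
/- For every U ∈ SL(2,ℂ) the determinant of φ(U) equals 1: det φ(U) = 1. Combined with φ(U)ᵀ · η · φ(U) = η and φ(U)₀₀ > 0, this shows φ(U) ∈ SO⁺(1,3). (Formula (5.19).) -/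
open Matrix Complex

/-- Explicit expansion of the determinant of a `4 × 4` matrix. -/
theorem det_fin_four' {R : Type*} [CommRing R] (A : Matrix (Fin 4) (Fin 4) R) :
    A.det =
      A 0 0*(A 1 1*(A 2 2*A 3 3 - A 2 3*A 3 2) - A 1 2*(A 2 1*A 3 3 - A 2 3*A 3 1)
        + A 1 3*(A 2 1*A 3 2 - A 2 2*A 3 1))
    - A 0 1*(A 1 0*(A 2 2*A 3 3 - A 2 3*A 3 2) - A 1 2*(A 2 0*A 3 3 - A 2 3*A 3 0)
        + A 1 3*(A 2 0*A 3 2 - A 2 2*A 3 0))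
    + A 0 2*(A 1 0*(A 2 1*A 3 3 - A 2 3*A 3 1) - A 1 1*(A 2 0*A 3 3 - A 2 3*A 3 0)
        + A 1 3*(A 2 0*A 3 1 - A 2 1*A 3 0))
    - A 0 3*(A 1 0*(A 2 1*A 3 2 - A 2 2*A 3 1) - A 1 1*(A 2 0*A 3 2 - A 2 2*A 3 0)
        + A 1 2*(A 2 0*A 3 1 - A 2 1*A 3 0)) := by
  rw [Matrix.det_succ_row_zero]
  simp [Fin.sum_univ_succ, Matrix.det_fin_three, Matrix.submatrix_apply, Fin.succAbove,
    show (Fin.succ 2 : Fin 4) = 3 from rfl, show (Fin.castSucc 2 : Fin 4) = 2 from rfl,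
    show ((1 : Fin 4) < 3) = True from by decide]
  ring

set_option maxHeartbeats 2000000 in
/-- **Formula (5.19)**: for `U ∈ SL(2,ℂ)`, `det φ(U) = 1`; combined with
`φ(U)ᵀ ⬝ η ⬝ φ(U) = η` and `φ(U)₀₀ > 0` this shows `φ(U) ∈ SO⁺(1,3)`. -/
theorem phi_det_one
    (U : Matrix (Fin 2) (Fin 2) ℂ) (hU : U.det = 1)
    (S : Matrix (Fin 4) (Fin 4) ℝ)
    (hS : ∀ v : Fin 4 → ℝ, hMat (S.mulVec v) = U * hMat v * Uᴴ) :
    S.det = 1 ∧ Sᵀ * minkEta * S = minkEta ∧ 0 < S 0 0 := by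
  have ha : U 0 0 * U 1 1 - U 0 1 * U 1 0 = 1 := by
    rw [Matrix.det_fin_two] at hU; exact hU
  have har := congrArg Complex.re ha
  have hai := congrArg Complex.im ha
  simp only [Complex.mul_re, Complex.mul_im, Complex.sub_re, Complex.sub_im,
    Complex.one_re, Complex.one_im] at har hai
  have hm0 : hMat (Pi.single 0 1) = !![1,0;0,1] := by
    ext i j; fin_cases i <;> fin_cases j <;> simp [hMat, Pi.single_apply]
  have hm1 : hMat (Pi.single 1 1) = !![0,1;1,0] := by
    ext i j; fin_cases i <;> fin_cases j <;> simp [hMat, Pi.single_apply]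
  have hm2 : hMat (Pi.single 2 1) = !![0,-Complex.I;Complex.I,0] := by
    ext i j; fin_cases i <;> fin_cases j <;> simp [hMat, Pi.single_apply]
  have hm3 : hMat (Pi.single 3 1) = !![1,0;0,-1] := by
    ext i j; fin_cases i <;> fin_cases j <;> simp [hMat, Pi.single_apply]
  have wh : ∀ v : Fin 4 → ℝ, ∀ i, wComp (hMat v) i = (v i : ℂ) := by
    intro v i; fin_cases i <;> simp [wComp, hMat] <;> ring_nf <;> simp [Complex.I_sq]
  have hcol : ∀ j : Fin 4, hMat (fun i => S i j) = U * hMat (Pi.single j 1) * Uᴴ := by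
    intro j
    have h := hS (Pi.single j 1)
    rwa [show S.mulVec (Pi.single j 1) = fun i => S i j by
      funext i; simp [Matrix.mulVec_single]] at h
  have keyR : ∀ j i : Fin 4, S i j = (wComp (U * hMat (Pi.single j 1) * Uᴴ) i).re := by
    intro j i
    rw [← hcol j, wh]
    simp
  refine ⟨?_, ?_, ?_⟩
  · rw [det_fin_four']
    simp only [keyR]
    simp [wComp, hm0, hm1, hm2, hm3, Matrix.mul_apply, Fin.sum_univ_two,
      Matrix.conjTranspose_apply, Complex.add_re, Complex.mul_re, Complex.sub_re,
      Complex.div_re]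
    set ar := (U 0 0).re; set ai := (U 0 0).im
    set br := (U 0 1).re; set bi := (U 0 1).im
    set cr := (U 1 0).re; set ci := (U 1 0).im
    set dr := (U 1 1).re; set di := (U 1 1).im
    linear_combination
      (((ar*dr - ai*di - (br*cr - bi*ci))^2 + (ar*di + ai*dr - (br*ci + bi*cr))^2 + 1) *
        ((ar*dr - ai*di - (br*cr - bi*ci)) + 1)) * har +
      (((ar*dr - ai*di - (br*cr - bi*ci))^2 + (ar*di + ai*dr - (br*ci + bi*cr))^2 + 1) *
        (ar*di + ai*dr - (br*ci + bi*cr))) * hai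
  · ext i j
    fin_cases i <;> fin_cases j <;>
      (simp only [Matrix.mul_apply, Matrix.transpose_apply, minkEta, Matrix.diagonal_apply,
        Fin.sum_univ_four]) <;>
      (simp only [keyR]) <;>
      (simp [wComp, hm0, hm1, hm2, hm3, Matrix.mul_apply, Fin.sum_univ_two,
        Matrix.conjTranspose_apply, Complex.add_re, Complex.mul_re, Complex.sub_re,
        Complex.div_re]) <;>
      (set ar := (U 0 0).re; set ai := (U 0 0).im
       set br := (U 0 1).re; set bi := (U 0 1).im
       set cr := (U 1 0).re; set ci := (U 1 0).im
       set dr := (U 1 1).re; set di := (U 1 1).im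
       first
        | ring1
        | linear_combination ((ar*dr - ai*di - (br*cr - bi*ci)) + 1) * har +
            (ar*di + ai*dr - (br*ci + bi*cr)) * hai
        | linear_combination (-((ar*dr - ai*di - (br*cr - bi*ci)) + 1)) * har -
            (ar*di + ai*dr - (br*ci + bi*cr)) * hai)
  · have h00 := keyR 0 0
    simp [wComp, hm0, Matrix.mul_apply, Fin.sum_univ_two, Matrix.conjTranspose_apply,
      Complex.add_re, Complex.mul_re, Complex.sub_re, Complex.div_re] at h00
    rw [h00]
    set ar := (U 0 0).re; set ai := (U 0 0).im
    set br := (U 0 1).re; set bi := (U 0 1).im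
    set cr := (U 1 0).re; set ci := (U 1 0).im
    set dr := (U 1 1).re; set di := (U 1 1).im
    nlinarith [har, sq_nonneg (ar - dr), sq_nonneg (ai + di), sq_nonneg (br + cr),
      sq_nonneg (bi - ci), sq_nonneg (ar + dr), sq_nonneg (ai - di), sq_nonneg (br - cr),
      sq_nonneg (bi + ci)]
end

section
/- The kernel of the homomorphism φ consists exactly of the two matrices σ₀ and −σ₀: for U ∈ SL(2,ℂ), φ(U) is the identity 4×4 matrix if and only if U = σ₀ or U = −σ₀, where σ₀ is the 2×2 identity matrix. Consequently, for U, V ∈ SL(2,ℂ), φ(U) = φ(V) if and only if V = U or V = −U. (Kernel assertion of Theorem 5.3.) -/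
open Matrix Complex

lemma hMat_inj {a b : Fin 4 → ℝ} (h : hMat a = hMat b) : a = b := by
  have h00 := congrFun (congrFun h 0) 0
  have h01 := congrFun (congrFun h 0) 1
  have h10 := congrFun (congrFun h 1) 0
  have h11 := congrFun (congrFun h 1) 1
  simp only [hMat, Matrix.cons_val', Matrix.cons_val_zero, Matrix.cons_val_one,
    Matrix.head_cons, Matrix.empty_val', Matrix.cons_val_fin_one, Matrix.head_fin_const,
    Matrix.of_apply] at h00 h01 h10 h11
  have e0 : (a 0 : ℂ) = b 0 := by linear_combination (h00 + h11) / 2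
  have e1 : (a 1 : ℂ) = b 1 := by linear_combination (h01 + h10) / 2
  have e2 : (a 2 : ℂ) = b 2 := by linear_combination Complex.I * (h01 - h10) / 2 + ((a 2 : ℂ) - b 2) * Complex.I_sq
  have e3 : (a 3 : ℂ) = b 3 := by linear_combination (h00 - h11) / 2
  funext i
  fin_cases i
  · exact_mod_cast e0
  · exact_mod_cast e1
  · exact_mod_cast e2
  · exact_mod_cast e3

lemma mulVec_ext {S T : Matrix (Fin 4) (Fin 4) ℝ}
    (h : ∀ v, S.mulVec v = T.mulVec v) : S = T := by
  ext i j
  have := congrFun (h (Pi.single j 1)) i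
  simpa [Matrix.mulVec_single] using this

lemma core (W : Matrix (Fin 2) (Fin 2) ℂ) (hdet : W.det = 1)
    (h : ∀ v : Fin 4 → ℝ, W * hMat v * Wᴴ = hMat v) : W = 1 ∨ W = -1 := by
  have h0 : hMat ![1, 0, 0, 0] = 1 := by
    ext i j; fin_cases i <;> fin_cases j <;> simp [hMat]
  have h1 : W * Wᴴ = 1 := by
    have := h ![1, 0, 0, 0]
    rw [h0] at this; simpa using this
  have h2 : Wᴴ * W = 1 := mul_eq_one_comm.mp h1
  -- σ₃
  have s3 : hMat ![0, 0, 0, 1] = !![(1 : ℂ), 0; 0, -1] := by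
    ext i j; fin_cases i <;> fin_cases j <;> simp [hMat]
  have s1 : hMat ![0, 1, 0, 0] = !![(0 : ℂ), 1; 1, 0] := by
    ext i j; fin_cases i <;> fin_cases j <;> simp [hMat]
  have hc3 : W * !![(1 : ℂ), 0; 0, -1] = !![(1 : ℂ), 0; 0, -1] * W := by
    have := h ![0, 0, 0, 1]
    rw [s3] at this
    calc W * !![(1 : ℂ), 0; 0, -1] = W * !![(1 : ℂ), 0; 0, -1] * (Wᴴ * W) := by
          rw [h2, mul_one]
      _ = (W * !![(1 : ℂ), 0; 0, -1] * Wᴴ) * W := (mul_assoc _ _ _).symm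
      _ = !![(1 : ℂ), 0; 0, -1] * W := by rw [this]
  have hc1 : W * !![(0 : ℂ), 1; 1, 0] = !![(0 : ℂ), 1; 1, 0] * W := by
    have := h ![0, 1, 0, 0]
    rw [s1] at this
    calc W * !![(0 : ℂ), 1; 1, 0] = W * !![(0 : ℂ), 1; 1, 0] * (Wᴴ * W) := by
          rw [h2, mul_one]
      _ = (W * !![(0 : ℂ), 1; 1, 0] * Wᴴ) * W := (mul_assoc _ _ _).symm
      _ = !![(0 : ℂ), 1; 1, 0] * W := by rw [this]
  have eb : W 0 1 = 0 := by
    have := congrFun (congrFun hc3 0) 1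
    simp [Matrix.mul_apply, Fin.sum_univ_two] at this
    linear_combination (-1/2 : ℂ) * this
  have ec : W 1 0 = 0 := by
    have := congrFun (congrFun hc3 1) 0
    simp [Matrix.mul_apply, Fin.sum_univ_two] at this
    linear_combination (1/2 : ℂ) * this
  have ead : W 0 0 = W 1 1 := by
    have := congrFun (congrFun hc1 0) 1
    simpa [Matrix.mul_apply, Fin.sum_univ_two, eb, ec] using this
  have hd : W 0 0 * W 0 0 = 1 := by
    rw [Matrix.det_fin_two] at hdet
    linear_combination hdet + W 0 0 * ead + W 1 0 * eb
  have := mul_self_eq_one_iff.mp hd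
  rcases this with h' | h'
  · left; ext i j; fin_cases i <;> fin_cases j <;>
      simp [h', eb, ec, ← ead, Matrix.one_apply]
  · right; ext i j; fin_cases i <;> fin_cases j <;>
      simp [h', eb, ec, ← ead, Matrix.one_apply]

/-- **Theorem 5.3, kernel assertion**: the kernel of `φ` consists exactly of `σ₀` and
`−σ₀`: for `U ∈ SL(2,ℂ)` with associated matrix `S = φ(U)`, `S = 1` iff `U = 1` or
`U = −1`; consequently `φ(U) = φ(V)` iff `V = U` or `V = −U`. -/
theorem phi_kernel :
    (∀ U : Matrix (Fin 2) (Fin 2) ℂ, U.det = 1 →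
      ∀ S : Matrix (Fin 4) (Fin 4) ℝ,
        (∀ v : Fin 4 → ℝ, hMat (S.mulVec v) = U * hMat v * Uᴴ) →
        (S = 1 ↔ U = 1 ∨ U = -1)) ∧
    (∀ U V : Matrix (Fin 2) (Fin 2) ℂ, U.det = 1 → V.det = 1 →
      ∀ S T : Matrix (Fin 4) (Fin 4) ℝ,
        (∀ v : Fin 4 → ℝ, hMat (S.mulVec v) = U * hMat v * Uᴴ) →
        (∀ v : Fin 4 → ℝ, hMat (T.mulVec v) = V * hMat v * Vᴴ) →
        (S = T ↔ V = U ∨ V = -U)) := by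
  constructor
  · intro U hU S hS
    constructor
    · intro h1
      subst h1
      apply core U hU
      intro v
      have := hS v
      rw [Matrix.one_mulVec] at this
      exact this.symm
    · rintro (rfl | rfl)
      · apply mulVec_ext
        intro v
        rw [Matrix.one_mulVec]
        apply hMat_inj
        simpa using hS v
      · apply mulVec_ext
        intro v
        rw [Matrix.one_mulVec]
        apply hMat_inj
        simpa [Matrix.conjTranspose_neg, neg_mul, mul_neg] using hS v
  · intro U V hU hV S T hS hT
    have hUne : IsUnit U.det := by rw [hU]; exact isUnit_one
    have hUHne : IsUnit Uᴴ.det := by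
      rw [Matrix.det_conjTranspose]
      exact hUne.map (starRingEnd ℂ)
    constructor
    · intro hST
      subst hST
      have key : ∀ v, (U⁻¹ * V) * hMat v * (U⁻¹ * V)ᴴ = hMat v := by
        intro v
        have h1 : U * hMat v * Uᴴ = V * hMat v * Vᴴ := by rw [← hS v, ← hT v]
        have h2 : (U⁻¹ * V)ᴴ = Vᴴ * (Uᴴ)⁻¹ := by
          rw [Matrix.conjTranspose_mul, Matrix.conjTranspose_nonsing_inv]
        rw [h2]
        calc U⁻¹ * V * hMat v * (Vᴴ * (Uᴴ)⁻¹)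
            = U⁻¹ * (V * hMat v * Vᴴ) * (Uᴴ)⁻¹ := by noncomm_ring
          _ = U⁻¹ * (U * hMat v * Uᴴ) * (Uᴴ)⁻¹ := by rw [h1]
          _ = (U⁻¹ * U) * (hMat v * (Uᴴ * (Uᴴ)⁻¹)) := by noncomm_ring
          _ = hMat v := by
              rw [Matrix.nonsing_inv_mul _ hUne, Matrix.mul_nonsing_inv _ hUHne,
                one_mul, mul_one]
      have hdet : (U⁻¹ * V).det = 1 := by
        rw [Matrix.det_mul, Matrix.det_nonsing_inv, hU, hV]; simp
      have hVeq : V = U * (U⁻¹ * V) := by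
        rw [← mul_assoc, Matrix.mul_nonsing_inv _ hUne, one_mul]
      rcases core _ hdet key with h' | h'
      · left
        rw [hVeq, h', mul_one]
      · right
        rw [hVeq, h']
        simp
    · rintro (rfl | rfl)
      · apply mulVec_ext; intro v; apply hMat_inj; rw [hS v, hT v]
      · apply mulVec_ext; intro v; apply hMat_inj
        rw [hS v, hT v]
        simp [Matrix.conjTranspose_neg, neg_mul, mul_neg]
end

section
/- Let M be a Hausdorff, σ-compact, finite-dimensional smooth (C^∞) real manifold without boundary and let π : E → M be a smooth complex vector bundle of finite rank over M. Then for every point x ∈ M and every vector v in the fiber E_x there exists a smooth global section s of E with s(x) = v. (Condition (1) of complete localization for the module of global smooth sections, part of Theorem 15.2.) -/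
open Bundle FiberBundle
open scoped Manifold ContDiff

theorem exists_contMDiff_section_apply_eq
    {E : Type*} [NormedAddCommGroup E] [NormedSpace ℝ E] [FiniteDimensional ℝ E]
    {H : Type*} [TopologicalSpace H] {I : ModelWithCorners ℝ E H}
    {M : Type*} [TopologicalSpace M] [ChartedSpace H M] [IsManifold I ∞ M] [T2Space M]
    {F : Type*} [NormedAddCommGroup F] [NormedSpace ℝ F]
    {V : M → Type*} [∀ x, AddCommGroup (V x)] [∀ x, Module ℝ (V x)]
    [∀ x, TopologicalSpace (V x)] [TopologicalSpace (TotalSpace F V)]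
    [FiberBundle F V] [VectorBundle ℝ F V] {n : ℕ∞} [ContMDiffVectorBundle n F V I]
    (x : M) (v : V x) :
    ∃ s : ∀ y, V y, ContMDiff I (I.prod 𝓘(ℝ, F)) n (fun y ↦ TotalSpace.mk' F y (s y)) ∧
      s x = v := by
  obtain ⟨u, hu, hextend⟩ := exists_contMDiffOn_extend (k := n) I F v
  obtain ⟨ψ, -, hψ⟩ := (SmoothBumpFunction.nhds_basis_tsupport (I := I) x).mem_iff.1
    (interior_mem_nhds.2 hu)
  refine ⟨(ψ : M → ℝ) • extend F v, ?_, by simp⟩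
  exact ContMDiffOn.smul_section_of_tsupport (ψ.contMDiff.of_le (mod_cast le_top)).contMDiffOn
    isOpen_interior hψ (hextend.mono interior_subset)

theorem smooth_section_through_any_fiber_vector_general
    {m : ℕ} {B : Type*} [TopologicalSpace B]
    [ChartedSpace (EuclideanSpace ℝ (Fin m)) B]
    [IsManifold (𝓡 m) (⊤ : ℕ∞) B] [T2Space B]
    (F : Type*) [NormedAddCommGroup F] [NormedSpace ℝ F]
    (E : B → Type*) [∀ x, AddCommGroup (E x)] [∀ x, Module ℝ (E x)]
    [∀ x, TopologicalSpace (E x)] [TopologicalSpace (Bundle.TotalSpace F E)]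
    [FiberBundle F E] [VectorBundle ℝ F E]
    [ContMDiffVectorBundle (⊤ : ℕ∞) F E (𝓡 m)] :
    ∀ (x : B) (v : E x), ∃ s : ∀ y, E y,
      (ContMDiff (𝓡 m) ((𝓡 m).prod 𝓘(ℝ, F)) (⊤ : ℕ∞)
        fun y => Bundle.TotalSpace.mk' F y (s y)) ∧ s x = v :=
  exists_contMDiff_section_apply_eq

/-- **Condition (1) of complete localization** (part of Theorem 15.2): for a smooth
complex vector bundle `E` of finite rank over a Hausdorff, σ-compact, finite-dimensional
smooth real manifold `B` without boundary, every vector `v` in any fiber `E x` is the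
value at `x` of some smooth global section. -/
theorem smooth_section_through_any_fiber_vector
    {m : ℕ} {B : Type*} [TopologicalSpace B]
    [ChartedSpace (EuclideanSpace ℝ (Fin m)) B]
    [IsManifold (𝓡 m) (⊤ : ℕ∞) B] [T2Space B] [SigmaCompactSpace B]
    (F : Type*) [NormedAddCommGroup F] [NormedSpace ℝ F] [NormedSpace ℂ F]
    [IsScalarTower ℝ ℂ F] [FiniteDimensional ℂ F]
    (E : B → Type*) [∀ x, AddCommGroup (E x)] [∀ x, Module ℝ (E x)] [∀ x, Module ℂ (E x)]
    [∀ x, TopologicalSpace (E x)] [TopologicalSpace (Bundle.TotalSpace F E)]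
    [FiberBundle F E] [VectorBundle ℝ F E] [VectorBundle ℂ F E]
    [ContMDiffVectorBundle (⊤ : ℕ∞) F E (𝓡 m)] :
    ∀ (x : B) (v : E x), ∃ s : ∀ y, E y,
      (ContMDiff (𝓡 m) ((𝓡 m).prod 𝓘(ℝ, F)) (⊤ : ℕ∞)
        fun y => Bundle.TotalSpace.mk' F y (s y)) ∧ s x = v :=
  smooth_section_through_any_fiber_vector_general F E
end

section
/- Let M be a Hausdorff, σ-compact, finite-dimensional smooth (C^∞) real manifold without boundary and let π : E → M be a smooth complex vector bundle of finite rank over M. If s is a smooth global section of E and x₀ ∈ M is a point with s(x₀) = 0, then there exist finitely many smooth global sections E₀, …, E_n of E and smooth complex-valued functions α₀, …, α_n ∈ C^∞(M, ℂ) with α₀(x₀) = … = α_n(x₀) = 0 such that s = α₀·E₀ + … + α_n·E_n. (Condition (2) of complete localization for the module of global smooth sections, part of Theorem 15.2.) -/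
/-!
Take a smooth bump function `ψ` with `ψ x₀ = 1` whose closed support lies in the base set of a
trivialization at `x₀`, and write `s = ∑ cᵢ σᵢ` there in the local frame `σᵢ` coming from a basis
of the model fiber. Then `s = (1 - ψ²) • s + ∑ (ψ cᵢ) • (ψ σᵢ)` with globally smooth factors, and
`1 - ψ²`, `ψ cᵢ` vanish at `x₀`. A complex bundle is also a real one, so real coefficients suffice.
-/

open Bundle
open scoped Manifold ContDiff

theorem Bundle.isScalarTower_fiber {B : Type*} [TopologicalSpace B]
    {R R' : Type*} [NontriviallyNormedField R] [NontriviallyNormedField R'] [SMul R R']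
    (F : Type*) [NormedAddCommGroup F] [NormedSpace R F] [NormedSpace R' F]
    [IsScalarTower R R' F]
    (E : B → Type*) [∀ x, AddCommGroup (E x)] [∀ x, Module R (E x)] [∀ x, Module R' (E x)]
    [∀ x, TopologicalSpace (E x)] [TopologicalSpace (TotalSpace F E)]
    [FiberBundle F E] [VectorBundle R F E] [VectorBundle R' F E] (x : B) :
    IsScalarTower R R' (E x) := by
  set e := trivializationAt F E x
  have hx : x ∈ e.baseSet := mem_baseSet_trivializationAt F E x
  refine ⟨fun r r' v => (e.linearEquivAt R x hx).injective ?_⟩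
  simp only [e.linearEquivAt_apply, (e.linear R hx).map_smul, (e.linear R' hx).map_smul,
    smul_assoc]

section LocalFrame

variable {𝕜 : Type*} [NontriviallyNormedField 𝕜]
  {EM : Type*} [NormedAddCommGroup EM] [NormedSpace 𝕜 EM]
  {H : Type*} [TopologicalSpace H] {I : ModelWithCorners 𝕜 EM H}
  {M : Type*} [TopologicalSpace M] [ChartedSpace H M]
  {F : Type*} [NormedAddCommGroup F] [NormedSpace 𝕜 F]
  {V : M → Type*} [TopologicalSpace (TotalSpace F V)] [∀ x, AddCommGroup (V x)]
  [∀ x, Module 𝕜 (V x)] [∀ x, TopologicalSpace (V x)] [FiberBundle F V]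
  [VectorBundle 𝕜 F V] [ContMDiffVectorBundle 1 F V I]
  {e : Trivialization F (TotalSpace.proj : TotalSpace F V → M)} [MemTrivializationAtlas e]
  {ι : Type*} (b : Module.Basis ι 𝕜 F) {ψ : M → 𝕜}

theorem contMDiff_mul_localFrameCoeff [CompleteSpace 𝕜] [FiniteDimensional 𝕜 F] {k : ℕ∞ω}
    [ContMDiffVectorBundle k F V I]
    (hψ : CMDiff k ψ) (hψe : tsupport ψ ⊆ e.baseSet) {s : Π x, V x} (hs : CMDiff k (T% s))
    (i : ι) : CMDiff k fun x => ψ x * e.localFrameCoeff I b i x (s x) :=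
  contMDiff_of_tsupport fun x hx =>
    (hψ x).mul (contMDiffAt_localFrameCoeff b (hψe (tsupport_mul_subset_left hx)) (hs x) i)

theorem mul_self_smul_eq_sum_localFrameCoeff [Fintype ι] (hψe : tsupport ψ ⊆ e.baseSet)
    (s : Π x, V x) (x : M) :
    (ψ x * ψ x) • s x =
      ∑ i, (ψ x * e.localFrameCoeff I b i x (s x)) • (ψ • e.localFrame b i) x := by
  by_cases hx : x ∈ e.baseSet
  · conv_lhs => rw [e.eq_sum_localFrameCoeff_smul (I := I) (b := b) (s := s) hx]
    simp only [Finset.smul_sum, Pi.smul_apply', smul_smul, mul_right_comm]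
  · simp [image_eq_zero_of_notMem_tsupport fun h => hx (hψe h)]

end LocalFrame

theorem exists_sum_smul_section_of_apply_eq_zero
    {EM : Type*} [NormedAddCommGroup EM] [NormedSpace ℝ EM] [FiniteDimensional ℝ EM]
    {H : Type*} [TopologicalSpace H] {I : ModelWithCorners ℝ EM H}
    {M : Type*} [TopologicalSpace M] [ChartedSpace H M] [IsManifold I ∞ M] [T2Space M]
    {F : Type*} [NormedAddCommGroup F] [NormedSpace ℝ F] [FiniteDimensional ℝ F]
    {V : M → Type*} [TopologicalSpace (TotalSpace F V)] [∀ x, AddCommGroup (V x)]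
    [∀ x, Module ℝ (V x)] [∀ x, TopologicalSpace (V x)] [FiberBundle F V]
    [VectorBundle ℝ F V] [ContMDiffVectorBundle ∞ F V I]
    {s : Π x, V x} (hs : CMDiff ∞ (T% s)) {x₀ : M} (hs₀ : s x₀ = 0) :
    ∃ (k : ℕ) (sec : Fin k → Π x, V x) (α : Fin k → M → ℝ),
      (∀ i, CMDiff ∞ (T% (sec i))) ∧ (∀ i, CMDiff ∞ (α i)) ∧ (∀ i, α i x₀ = 0) ∧
      ∀ x, s x = ∑ i, α i x • sec i x := by
  set e := trivializationAt F V x₀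
  obtain ⟨ψ, -, hψe⟩ := (SmoothBumpFunction.nhds_basis_tsupport (I := I) x₀).mem_iff.1
    (e.open_baseSet.mem_nhds (mem_baseSet_trivializationAt F V x₀))
  set b := Module.finBasis ℝ F
  refine ⟨Module.finrank ℝ F + 1, Fin.cons s fun i => ⇑ψ • e.localFrame b i,
    Fin.cons (1 - ⇑ψ * ⇑ψ) fun i x => ψ x * e.localFrameCoeff I b i x (s x), ?_, ?_, ?_, ?_⟩
  · refine Fin.cases hs fun i => ?_
    exact ψ.contMDiff.contMDiffOn.smul_section_of_tsupport e.open_baseSet hψe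
      (e.contMDiffOn_localFrame_baseSet ∞ b i)
  · refine Fin.cases (contMDiff_const.sub (ψ.contMDiff.mul ψ.contMDiff)) fun i => ?_
    exact contMDiff_mul_localFrameCoeff b ψ.contMDiff hψe hs i
  · exact Fin.cases (by simp) fun i => by simp [hs₀]
  · intro x
    rw [Fin.sum_univ_succ]
    simp only [Fin.cons_zero, Fin.cons_succ]
    rw [← mul_self_smul_eq_sum_localFrameCoeff b hψe, Pi.sub_apply, sub_smul, Pi.one_apply,
      one_smul, Pi.mul_apply, sub_add_cancel]

theorem section_vanishing_at_point_decomposition_general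
    {m : ℕ} {B : Type*} [TopologicalSpace B]
    [ChartedSpace (EuclideanSpace ℝ (Fin m)) B]
    [IsManifold (𝓡 m) ((⊤ : ℕ∞) : WithTop ℕ∞) B] [T2Space B]
    (F : Type*) [NormedAddCommGroup F] [NormedSpace ℝ F] [NormedSpace ℂ F]
    [IsScalarTower ℝ ℂ F] [FiniteDimensional ℂ F]
    (E : B → Type*) [∀ x, AddCommGroup (E x)] [∀ x, Module ℝ (E x)] [∀ x, Module ℂ (E x)]
    [∀ x, TopologicalSpace (E x)] [TopologicalSpace (Bundle.TotalSpace F E)]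
    [FiberBundle F E] [VectorBundle ℝ F E] [VectorBundle ℂ F E]
    [ContMDiffVectorBundle ((⊤ : ℕ∞) : WithTop ℕ∞) F E (𝓡 m)]
    (s : ∀ y, E y)
    (hs : ContMDiff (𝓡 m) ((𝓡 m).prod 𝓘(ℝ, F)) (⊤ : ℕ∞)
      fun y => Bundle.TotalSpace.mk' F y (s y))
    (x₀ : B) (hs₀ : s x₀ = 0) :
    ∃ (k : ℕ) (sec : Fin k → ∀ y, E y) (α : Fin k → B → ℂ),
      (∀ i, ContMDiff (𝓡 m) ((𝓡 m).prod 𝓘(ℝ, F)) (⊤ : ℕ∞)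
        fun y => Bundle.TotalSpace.mk' F y (sec i y)) ∧
      (∀ i, ContMDiff (𝓡 m) 𝓘(ℝ, ℂ) (⊤ : ℕ∞) (α i)) ∧
      (∀ i, α i x₀ = 0) ∧
      (∀ y, s y = ∑ i, α i y • sec i y) := by
  have : FiniteDimensional ℝ F := Module.Finite.trans ℂ F
  have := Bundle.isScalarTower_fiber (R := ℝ) (R' := ℂ) F E
  obtain ⟨k, sec, α, hsec, hα, hα₀, hsum⟩ := exists_sum_smul_section_of_apply_eq_zero hs hs₀
  refine ⟨k, sec, fun i y => α i y, hsec, fun i => ?_, fun i => by simp [hα₀ i], fun y => ?_⟩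
  · exact Complex.ofRealCLM.contDiff.contMDiff.comp (hα i)
  · exact (hsum y).trans
      (Finset.sum_congr rfl fun i _ => RCLike.real_smul_eq_coe_smul (K := ℂ) _ _)

/-- **Condition (2) of complete localization** (part of Theorem 15.2): for a smooth
complex vector bundle `E` of finite rank over a Hausdorff, σ-compact, finite-dimensional
smooth real manifold `B` without boundary, every smooth global section `s` vanishing at a
point `x₀` can be written as `s = α₀•E₀ + … + α_k•E_k` with finitely many smooth global
sections `E_i` and smooth complex functions `α_i` vanishing at `x₀`. -/
theorem section_vanishing_at_point_decomposition
    {m : ℕ} {B : Type*} [TopologicalSpace B]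
    [ChartedSpace (EuclideanSpace ℝ (Fin m)) B]
    [IsManifold (𝓡 m) ((⊤ : ℕ∞) : WithTop ℕ∞) B] [T2Space B] [SigmaCompactSpace B]
    (F : Type*) [NormedAddCommGroup F] [NormedSpace ℝ F] [NormedSpace ℂ F]
    [IsScalarTower ℝ ℂ F] [FiniteDimensional ℂ F]
    (E : B → Type*) [∀ x, AddCommGroup (E x)] [∀ x, Module ℝ (E x)] [∀ x, Module ℂ (E x)]
    [∀ x, TopologicalSpace (E x)] [TopologicalSpace (Bundle.TotalSpace F E)]
    [FiberBundle F E] [VectorBundle ℝ F E] [VectorBundle ℂ F E]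
    [ContMDiffVectorBundle ((⊤ : ℕ∞) : WithTop ℕ∞) F E (𝓡 m)]
    (s : ∀ y, E y)
    (hs : ContMDiff (𝓡 m) ((𝓡 m).prod 𝓘(ℝ, F)) (⊤ : ℕ∞)
      fun y => Bundle.TotalSpace.mk' F y (s y))
    (x₀ : B) (hs₀ : s x₀ = 0) :
    ∃ (k : ℕ) (sec : Fin k → ∀ y, E y) (α : Fin k → B → ℂ),
      (∀ i, ContMDiff (𝓡 m) ((𝓡 m).prod 𝓘(ℝ, F)) (⊤ : ℕ∞)
        fun y => Bundle.TotalSpace.mk' F y (sec i y)) ∧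
      (∀ i, ContMDiff (𝓡 m) 𝓘(ℝ, ℂ) (⊤ : ℕ∞) (α i)) ∧
      (∀ i, α i x₀ = 0) ∧
      (∀ y, s y = ∑ i, α i y • sec i y) :=
  section_vanishing_at_point_decomposition_general F E s hs x₀ hs₀
end
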